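/- arXiv:1608.03246 — 5 statements merged into one kernel-verified Lean document; each statement's English description precedes it below -/
import Mathlib

section
/- Let M be a Γ-semigroup. If M is both left simple and right simple, then M is regular. -/
/-- For a map `f : M → Γ → M → M` (written `aγb`), `gprod f A B` is the set
`AΓB = {aγb : a ∈ A, γ ∈ Γ, b ∈ B}`. -/
def gprod {M Γ : Type*} (f : M → Γ → M → M) (A B : Set M) : Set M :=
  {x | ∃ a ∈ A, ∃ γ : Γ, ∃ b ∈ B, x = f a γ b}

/-- A nonempty subset `A` with `MΓA ⊆ A` is a left ideal. -/
def IsLeftIdeal {M Γ : Type*} (f : M → Γ → M → M) (A : Set M) : Prop :=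
  A.Nonempty ∧ gprod f Set.univ A ⊆ A

/-- A nonempty subset `A` with `AΓM ⊆ A` is a right ideal. -/
def IsRightIdeal {M Γ : Type*} (f : M → Γ → M → M) (A : Set M) : Prop :=
  A.Nonempty ∧ gprod f A Set.univ ⊆ A

/-- A nonempty subset `A` with `AΓMΓA ⊆ A` is a bi-ideal. -/
def IsBiIdeal {M Γ : Type*} (f : M → Γ → M → M) (A : Set M) : Prop :=
  A.Nonempty ∧ gprod f (gprod f A Set.univ) A ⊆ A

/-- `M` is left simple if its only left ideal is `M` itself. -/
def LeftSimple {M Γ : Type*} (f : M → Γ → M → M) : Prop :=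
  ∀ A : Set M, IsLeftIdeal f A → A = Set.univ

/-- `M` is right simple if its only right ideal is `M` itself. -/
def RightSimple {M Γ : Type*} (f : M → Γ → M → M) : Prop :=
  ∀ A : Set M, IsRightIdeal f A → A = Set.univ

/-- `M` is regular if for every `a` there are `x, γ, μ` with `a = aγxμa`. -/
def GRegular {M Γ : Type*} (f : M → Γ → M → M) : Prop :=
  ∀ a : M, ∃ (x : M) (γ μ : Γ), a = f (f a γ x) μ a

/-- If a Γ-semigroup `M` is both left simple and right simple,
then `M` is regular. -/
theorem stmt_3 {M Γ : Type*} [Nonempty M] [Nonempty Γ] (f : M → Γ → M → M)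
    (assoc : ∀ (a b c : M) (γ μ : Γ), f (f a γ b) μ c = f a γ (f b μ c))
    (hl : LeftSimple f) (hr : RightSimple f) : GRegular f := by
  intro a
  obtain ⟨γ0⟩ := ‹Nonempty Γ›
  -- L = MΓa is a left ideal
  have hL : gprod f Set.univ {a} = Set.univ := by
    apply hl
    constructor
    · exact ⟨f a γ0 a, a, trivial, γ0, a, rfl, rfl⟩
    · rintro x ⟨m, -, γ, b, ⟨n, -, μ, c, rfl, rfl⟩, rfl⟩
      exact ⟨f m γ n, trivial, μ, c, rfl, (assoc m n c γ μ).symm⟩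
  -- R = aΓM is a right ideal
  have hR : gprod f {a} Set.univ = Set.univ := by
    apply hr
    constructor
    · exact ⟨f a γ0 a, a, rfl, γ0, a, trivial, rfl⟩
    · rintro x ⟨b, ⟨n, rfl, μ, c, -, rfl⟩, γ, m, -, rfl⟩
      exact ⟨n, rfl, μ, f c γ m, trivial, assoc n c m μ γ⟩
  have ha : a ∈ gprod f {a} Set.univ := by rw [hR]; trivial
  obtain ⟨a', ha', γ, b, -, hab⟩ := ha
  have hb : b ∈ gprod f Set.univ {a} := by rw [hL]; trivial
  obtain ⟨x, -, μ, a'', ha'', hbx⟩ := hb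
  subst ha'; subst ha''
  exact ⟨x, γ, μ, by rw [assoc, ← hbx, ← hab]⟩
end

section
/- A Γ-semigroup M is both left simple and right simple if and only if M does not contain proper bi-ideals (i.e., every bi-ideal A of M satisfies A = M). -/
/-- A Γ-semigroup `M` is both left simple and right simple iff
`M` contains no proper bi-ideals, i.e. every bi-ideal `A` satisfies `A = M`. -/
theorem stmt_7 {M Γ : Type*} [Nonempty M] [Nonempty Γ] (f : M → Γ → M → M)
    (assoc : ∀ (a b c : M) (γ μ : Γ), f (f a γ b) μ c = f a γ (f b μ c)) :
    (LeftSimple f ∧ RightSimple f) ↔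
      (∀ A : Set M, IsBiIdeal f A → A = Set.univ) := by
  constructor
  · rintro ⟨hL, hR⟩ A ⟨⟨a, ha⟩, hA⟩
    have hγ : Nonempty Γ := inferInstance
    obtain ⟨γ0⟩ := hγ
    -- MΓa = univ
    have hMa : gprod f Set.univ {a} = Set.univ := by
      apply hL
      refine ⟨⟨f a γ0 a, a, trivial, γ0, a, rfl, rfl⟩, ?_⟩
      rintro x ⟨u, _, γ, v, hv, rfl⟩
      obtain ⟨w, _, μ, b, hb, rfl⟩ := hv
      exact ⟨f u γ w, trivial, μ, b, hb, (assoc u w b γ μ).symm⟩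
    -- aΓM = univ
    have haM : gprod f {a} Set.univ = Set.univ := by
      apply hR
      refine ⟨⟨f a γ0 a, a, rfl, γ0, a, trivial, rfl⟩, ?_⟩
      rintro x ⟨u, hu, γ, v, _, rfl⟩
      obtain ⟨w, hw, μ, b, _, rfl⟩ := hu
      exact ⟨w, hw, μ, f b γ v, trivial, assoc w b v μ γ⟩
    apply Set.eq_univ_of_forall
    intro m
    have hm : m ∈ gprod f Set.univ {a} := by rw [hMa]; trivial
    obtain ⟨x, _, γ, b, hb, rfl⟩ := hm
    have hx : x ∈ gprod f {a} Set.univ := by rw [haM]; trivial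
    obtain ⟨u, hu, μ, v, _, rfl⟩ := hx
    rcases hb with rfl
    apply hA
    refine ⟨f u μ v, ⟨u, ?_, μ, v, trivial, rfl⟩, γ, b, ha, rfl⟩
    rcases hu with rfl; exact ha
  · intro h
    constructor
    · intro A ⟨hne, hA⟩
      apply h
      refine ⟨hne, ?_⟩
      rintro x ⟨u, hu, γ, b, hb, rfl⟩
      exact hA ⟨u, trivial, γ, b, hb, rfl⟩
    · intro A ⟨hne, hA⟩
      apply h
      refine ⟨hne, ?_⟩
      rintro x ⟨u, hu, γ, b, hb, rfl⟩
      obtain ⟨w, hw, μ, v, _, rfl⟩ := hu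
      rw [assoc]
      exact hA ⟨w, hw, μ, f v γ b, trivial, rfl⟩
end

section
/- Let H be a hypersemigroup. If H is both left simple and right simple, then H is regular. -/
/-- For a hyperoperation `circ : H → H → Set H`, `hstar circ A B` is the set
`A*B = ⋃_{(a,b) ∈ A×B} (a∘b)`. -/
def hstar {H : Type*} (circ : H → H → Set H) (A B : Set H) : Set H :=
  {x | ∃ a ∈ A, ∃ b ∈ B, x ∈ circ a b}

/-- `circ` is a hyperoperation (all values nonempty), i.e. `H` is a hypergroupoid. -/
def IsHypergroupoid {H : Type*} (circ : H → H → Set H) : Prop :=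
  ∀ a b : H, (circ a b).Nonempty

/-- A hypergroupoid is a hypersemigroup if `{x}*(y∘z) = (x∘y)*{z}` for all `x,y,z`. -/
def IsHypersemigroup {H : Type*} (circ : H → H → Set H) : Prop :=
  IsHypergroupoid circ ∧
    ∀ x y z : H, hstar circ {x} (circ y z) = hstar circ (circ x y) {z}

/-- A nonempty subset `A` with `H*A ⊆ A` is a left ideal. -/
def IsHLeftIdeal {H : Type*} (circ : H → H → Set H) (A : Set H) : Prop :=
  A.Nonempty ∧ hstar circ Set.univ A ⊆ A

/-- A nonempty subset `A` with `A*H ⊆ A` is a right ideal. -/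
def IsHRightIdeal {H : Type*} (circ : H → H → Set H) (A : Set H) : Prop :=
  A.Nonempty ∧ hstar circ A Set.univ ⊆ A

/-- A nonempty subset `A` with `A*H*A ⊆ A` is a bi-ideal. -/
def IsHBiIdeal {H : Type*} (circ : H → H → Set H) (A : Set H) : Prop :=
  A.Nonempty ∧ hstar circ (hstar circ A Set.univ) A ⊆ A

/-- `H` is left simple if its only left ideal is `H` itself. -/
def HLeftSimple {H : Type*} (circ : H → H → Set H) : Prop :=
  ∀ A : Set H, IsHLeftIdeal circ A → A = Set.univ

/-- `H` is right simple if its only right ideal is `H` itself. -/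
def HRightSimple {H : Type*} (circ : H → H → Set H) : Prop :=
  ∀ A : Set H, IsHRightIdeal circ A → A = Set.univ

/-- `H` is regular if for every `a` there is `x` with `a ∈ {a}*{x}*{a}`. -/
def HRegular {H : Type*} (circ : H → H → Set H) : Prop :=
  ∀ a : H, ∃ x : H, a ∈ hstar circ (hstar circ {a} {x}) {a}

/-- If a hypersemigroup `H` is both left simple and right simple,
then `H` is regular. -/
theorem stmt_12 {H : Type*} [Nonempty H] (circ : H → H → Set H)
    (hsg : IsHypersemigroup circ)
    (hl : HLeftSimple circ) (hr : HRightSimple circ) : HRegular circ := by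
  obtain ⟨hne, hassoc⟩ := hsg
  intro a
  -- {a}*H is a right ideal
  have hra : hstar circ {a} Set.univ = Set.univ := by
    apply hr
    constructor
    · obtain ⟨t, ht⟩ := hne a a
      exact ⟨t, a, rfl, a, trivial, ht⟩
    · rintro w ⟨b, ⟨a', ha', x, -, hb⟩, c, -, hw⟩
      cases ha'
      have : w ∈ hstar circ (circ a x) {c} := ⟨b, hb, c, rfl, hw⟩
      rw [← hassoc] at this
      obtain ⟨a', ha', d, hd, hw'⟩ := this
      cases ha'
      exact ⟨a, rfl, d, trivial, hw'⟩
  -- H*{a} is a left ideal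
  have hla : hstar circ Set.univ {a} = Set.univ := by
    apply hl
    constructor
    · obtain ⟨t, ht⟩ := hne a a
      exact ⟨t, a, trivial, a, rfl, ht⟩
    · rintro w ⟨c, -, b, ⟨x, -, a', ha', hb⟩, hw⟩
      cases ha'
      have : w ∈ hstar circ {c} (circ x a) := ⟨c, rfl, b, hb, hw⟩
      rw [hassoc] at this
      obtain ⟨d, hd, a', ha', hw'⟩ := this
      cases ha'
      exact ⟨d, trivial, a, rfl, hw'⟩
  -- a ∈ {a}*H : get c with a ∈ a∘c
  have ha1 : a ∈ hstar circ {a} Set.univ := by rw [hra]; trivial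
  obtain ⟨a', ha', c, -, hac⟩ := ha1
  cases ha'
  -- c ∈ H*{a} : get x with c ∈ x∘a
  have hc1 : c ∈ hstar circ Set.univ {a} := by rw [hla]; trivial
  obtain ⟨x, -, a', ha', hxa⟩ := hc1
  cases ha'
  refine ⟨x, ?_⟩
  have : a ∈ hstar circ {a} (circ x a) := ⟨a, rfl, c, hxa, hac⟩
  rw [hassoc] at this
  obtain ⟨u, hu, a', ha', h⟩ := this
  cases ha'
  exact ⟨u, ⟨a, rfl, x, rfl, hu⟩, a, rfl, h⟩
end

section
/- A hypersemigroup H is both left simple and right simple if and only if H does not contain proper bi-ideals (i.e., every bi-ideal A of H satisfies A = H). -/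
lemma hstar_mono {H : Type*} (circ : H → H → Set H) {A B C D : Set H}
    (hAC : A ⊆ C) (hBD : B ⊆ D) : hstar circ A B ⊆ hstar circ C D := by
  rintro x ⟨a, ha, b, hb, hx⟩
  exact ⟨a, hAC ha, b, hBD hb, hx⟩

lemma univ_hstar_eq {H : Type*} (circ : H → H → Set H)
    (hsg : IsHypersemigroup circ) (hls : HLeftSimple circ) (a : H) :
    hstar circ Set.univ {a} = Set.univ := by
  apply hls
  constructor
  · obtain ⟨c, hc⟩ := hsg.1 a a
    exact ⟨c, a, trivial, a, rfl, hc⟩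
  · rintro x ⟨u, -, y, ⟨v, -, b, hb, hy⟩, hx⟩
    rw [show b = a from hb] at hy
    have hx' : x ∈ hstar circ {u} (circ v a) := ⟨u, rfl, y, hy, hx⟩
    rw [hsg.2 u v a] at hx'
    obtain ⟨w, hw, b', hb', hx''⟩ := hx'
    exact ⟨w, trivial, b', hb', hx''⟩

lemma hstar_univ_eq {H : Type*} (circ : H → H → Set H)
    (hsg : IsHypersemigroup circ) (hrs : HRightSimple circ) (a : H) :
    hstar circ {a} Set.univ = Set.univ := by
  apply hrs
  constructor
  · obtain ⟨c, hc⟩ := hsg.1 a a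
    exact ⟨c, a, rfl, a, trivial, hc⟩
  · rintro x ⟨y, ⟨b, hb, u, -, hy⟩, z, -, hx⟩
    rw [show b = a from hb] at hy
    have hx' : x ∈ hstar circ (circ a u) {z} := ⟨y, hy, z, rfl, hx⟩
    rw [← hsg.2 a u z] at hx'
    obtain ⟨b', hb', w, hw, hx''⟩ := hx'
    exact ⟨b', hb', w, trivial, hx''⟩

/-- A hypersemigroup `H` is both left simple and right simple iff
`H` contains no proper bi-ideals, i.e. every bi-ideal `A` satisfies `A = H`. -/
theorem stmt_16 {H : Type*} [Nonempty H] (circ : H → H → Set H)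
    (hsg : IsHypersemigroup circ) :
    (HLeftSimple circ ∧ HRightSimple circ) ↔
      (∀ A : Set H, IsHBiIdeal circ A → A = Set.univ) := by
  constructor
  · rintro ⟨hls, hrs⟩ A ⟨⟨a, ha⟩, hbi⟩
    apply Set.eq_univ_of_univ_subset
    intro x _
    apply hbi
    have h1 : hstar circ {a} Set.univ = Set.univ := hstar_univ_eq circ hsg hrs a
    have h2 : hstar circ Set.univ {a} = Set.univ := univ_hstar_eq circ hsg hls a
    have : x ∈ hstar circ (hstar circ {a} Set.univ) {a} := by
      rw [h1, h2]; trivial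
    exact hstar_mono circ (hstar_mono circ (Set.singleton_subset_iff.2 ha) subset_rfl)
      (Set.singleton_subset_iff.2 ha) this
  · intro h
    constructor
    · rintro A ⟨hne, hsub⟩
      apply h A
      refine ⟨hne, ?_⟩
      intro x hx
      apply hsub
      exact hstar_mono circ (Set.subset_univ _) subset_rfl hx
    · rintro A ⟨hne, hsub⟩
      apply h A
      refine ⟨hne, ?_⟩
      intro x hx
      apply hsub
      have : hstar circ (hstar circ A Set.univ) A ⊆ hstar circ A Set.univ :=
        hstar_mono circ hsub (Set.subset_univ _)
      exact this hx
end

section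
/- Let H be a hypergroup. Then H does not contain proper bi-ideals; i.e., every bi-ideal A of H satisfies A = H. -/
/-- If `H` is a hypergroup (a hypersemigroup with an identity `e`
such that `a∘e = e∘a = {a}` for all `a`, and inverses: for every `a` there is
`a⁻¹` with `a∘a⁻¹ = a⁻¹∘a = {e}`), then every bi-ideal `A` of `H` satisfies
`A = H`. -/
theorem stmt_17 {H : Type*} [Nonempty H] (circ : H → H → Set H)
    (hsg : IsHypersemigroup circ) (e : H)
    (he : ∀ a : H, circ a e = {a} ∧ circ e a = {a})
    (hinv : ∀ a : H, ∃ ainv : H, circ a ainv = {e} ∧ circ ainv a = {e})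
    (A : Set H) (hA : IsHBiIdeal circ A) : A = Set.univ := by
  obtain ⟨a, haA⟩ := hA.1
  obtain ⟨ai, hai1, hai2⟩ := hinv a
  apply Set.eq_univ_of_forall
  intro h
  obtain ⟨w, hw⟩ := hsg.1 ai h
  obtain ⟨x, hx⟩ := hsg.1 w ai
  -- circ x a ⊆ {w}
  have hxa : circ x a ⊆ {w} := by
    intro y hy
    have : y ∈ hstar circ (circ w ai) {a} := ⟨x, hx, a, rfl, hy⟩
    rw [← hsg.2 w ai a] at this
    obtain ⟨b, hb, c, hc, hy2⟩ := this
    simp only [Set.mem_singleton_iff] at hb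
    rw [hai2] at hc
    simp only [Set.mem_singleton_iff] at hc
    rw [hb, hc, (he w).1] at hy2
    exact hy2
  obtain ⟨y0, hy0⟩ := hsg.1 x a
  have hwxa : w ∈ circ x a := by
    have := hxa hy0
    simp only [Set.mem_singleton_iff] at this
    rwa [this] at hy0
  -- circ a w ⊆ {h}
  have haw : circ a w ⊆ {h} := by
    intro y hy
    have : y ∈ hstar circ {a} (circ ai h) := ⟨a, rfl, w, hw, hy⟩
    rw [hsg.2 a ai h] at this
    obtain ⟨b, hb, c, hc, hy2⟩ := this
    rw [hai1] at hb
    simp only [Set.mem_singleton_iff] at hb hc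
    rw [hb, hc, (he h).2] at hy2
    exact hy2
  obtain ⟨z0, hz0⟩ := hsg.1 a w
  have hhaw : h ∈ circ a w := by
    have := haw hz0
    simp only [Set.mem_singleton_iff] at this
    rwa [this] at hz0
  -- h ∈ (a∘x)*{a}
  have h1 : h ∈ hstar circ (circ a x) {a} := by
    rw [← hsg.2 a x a]
    exact ⟨a, rfl, w, hwxa, hhaw⟩
  obtain ⟨t, ht, b, hb, hhb⟩ := h1
  simp only [Set.mem_singleton_iff] at hb
  rw [hb] at hhb
  exact hA.2 ⟨t, ⟨a, haA, x, trivial, ht⟩, a, haA, hhb⟩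
end
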